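/- arXiv:math/0212068 — 3 statements merged into one kernel-verified Lean document; each statement's English description precedes it below -/
import Mathlib

section
/- Let N be a positive integer, let Ω be a bounded open subset of ℝ^N, let f : ℝ^N → ℂ be smooth with compact support contained in Ω, let n be a nonnegative integer, let 0 < κ ≤ 1 and M ≥ 0. Suppose that for every unit vector v ∈ ℝ^N and every x ∈ ℝ^N the n-th directional derivative of f along v satisfies |∂ⁿf(x)/∂vⁿ| ≤ M · dist(x, Ωᶜ)^κ. Then for every x ∈ Ω, |f(x)| ≤ M · dist(x, Ωᶜ)^{n+κ}. -/
open Bornology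

/-- The integration-to-the-boundary step in the proofs of Lemma 3 and Theorem 5 of the
paper: if `f` is smooth with compact support in a bounded open `Ω ⊆ ℝ^N` and all
`n`-th directional derivatives satisfy `|∂ⁿf/∂vⁿ(x)| ≤ M dist(x, Ωᶜ)^κ`, then
`|f(x)| ≤ M dist(x, Ωᶜ)^{n+κ}` for `x ∈ Ω`. -/
theorem stmt3 (N : ℕ) (hN : 0 < N) (Ω : Set (EuclideanSpace ℝ (Fin N)))
    (hΩo : IsOpen Ω) (hΩb : IsBounded Ω) (f : EuclideanSpace ℝ (Fin N) → ℂ)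
    (hsm : ContDiff ℝ (⊤ : ℕ∞) f) (hcs : HasCompactSupport f) (hsupp : tsupport f ⊆ Ω)
    (n : ℕ) (κ M : ℝ) (hκ0 : 0 < κ) (hκ1 : κ ≤ 1) (hM : 0 ≤ M)
    (hder : ∀ v : EuclideanSpace ℝ (Fin N), ‖v‖ = 1 →
      ∀ x : EuclideanSpace ℝ (Fin N),
        ‖iteratedFDeriv ℝ n f x (fun _ => v)‖ ≤ M * Metric.infDist x Ωᶜ ^ κ)
    (x : EuclideanSpace ℝ (Fin N)) (hx : x ∈ Ω) :
    ‖f x‖ ≤ M * Metric.infDist x Ωᶜ ^ ((n : ℝ) + κ) := by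
  classical
  -- Ωᶜ is nonempty
  have hNe : (Ωᶜ).Nonempty := by
    by_contra h
    rw [Set.not_nonempty_iff_eq_empty, Set.compl_empty_iff] at h
    obtain ⟨R, hR⟩ := hΩb.subset_closedBall 0
    set z : EuclideanSpace ℝ (Fin N) := EuclideanSpace.single ⟨0, hN⟩ (|R| + 1) with hz
    have hzΩ : z ∈ Ω := h ▸ Set.mem_univ z
    have := hR hzΩ
    rw [Metric.mem_closedBall, dist_zero_right, hz, EuclideanSpace.norm_single] at this
    have : |R| + 1 ≤ R := le_trans (le_of_eq (abs_of_nonneg (by positivity)).symm) this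
    nlinarith [abs_nonneg R, le_abs_self R]
  have hΩcc : IsClosed (Ωᶜ) := hΩo.isClosed_compl
  set d : ℝ := Metric.infDist x Ωᶜ with hd
  have hd0 : 0 < d := (hΩcc.notMem_iff_infDist_pos hNe).1 (by simpa using hx)
  obtain ⟨y, hyΩc, hyd⟩ := hΩcc.exists_infDist_eq_dist hNe x
  have hdy : dist x y = d := hyd.symm
  set v : EuclideanSpace ℝ (Fin N) := d⁻¹ • (y - x) with hv
  have hvnorm : ‖v‖ = 1 := by
    rw [hv, norm_smul, norm_inv, Real.norm_eq_abs, abs_of_pos hd0]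
    have : ‖y - x‖ = d := by rw [← hdy, dist_eq_norm, norm_sub_rev]
    rw [this]
    field_simp
  -- the function along the segment
  set g : ℕ → ℝ → ℂ := fun k t => iteratedFDeriv ℝ k f (x + t • v) (fun _ => v) with hg
  have hline : ∀ t : ℝ, HasDerivAt (fun t : ℝ => x + t • v) v t := by
    intro t
    simpa using ((hasDerivAt_id t).smul_const v).const_add x
  have hA : ∀ (k : ℕ) (t : ℝ), HasDerivAt (g k) (g (k + 1) t) t := by
    intro k t
    have hdiff : DifferentiableAt ℝ (iteratedFDeriv ℝ k f) (x + t • v) :=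
      (hsm.differentiable_iteratedFDeriv (by exact_mod_cast ENat.coe_lt_top k)).differentiableAt
    have h1 : HasDerivAt (fun t : ℝ => iteratedFDeriv ℝ k f (x + t • v))
        (fderiv ℝ (iteratedFDeriv ℝ k f) (x + t • v) v) t :=
      hdiff.hasFDerivAt.comp_hasDerivAt t (hline t)
    have h2 := (ContinuousMultilinearMap.apply ℝ (fun _ : Fin k => EuclideanSpace ℝ (Fin N)) ℂ
      (fun _ => v)).hasFDerivAt.comp_hasDerivAt t h1
    have h3 : g (k + 1) t = ContinuousMultilinearMap.apply ℝ
        (fun _ : Fin k => EuclideanSpace ℝ (Fin N)) ℂ (fun _ => v)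
        (fderiv ℝ (iteratedFDeriv ℝ k f) (x + t • v) v) := by
      show iteratedFDeriv ℝ (k + 1) f (x + t • v) (fun _ => v) = _
      rw [iteratedFDeriv_succ_apply_left]
      rfl
    rw [h3]
    exact h2
  have hgc : ∀ k : ℕ, Continuous (g k) := by
    intro k
    exact continuous_iff_continuousAt.2 fun t => (hA k t).continuousAt
  have hxy : x + d • v = y := by
    rw [hv, smul_smul, mul_inv_cancel₀ hd0.ne', one_smul]
    abel
  have hB : ∀ k : ℕ, g k d = 0 := by
    intro k
    have hy0 : iteratedFDeriv ℝ k f y = 0 := by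
      by_contra h
      exact hyΩc (hsupp (support_iteratedFDeriv_subset k (by simpa using h)))
    rw [hg]; simp only [hxy, hy0]; rfl
  -- distance bound along the segment
  have hdist : ∀ t ∈ Set.Icc (0 : ℝ) d, Metric.infDist (x + t • v) Ωᶜ ≤ d - t := by
    intro t ht
    calc Metric.infDist (x + t • v) Ωᶜ ≤ dist (x + t • v) y := Metric.infDist_le_dist_of_mem hyΩc
      _ = ‖(t - d) • v‖ := by
          rw [dist_eq_norm]
          congr 1
          rw [sub_smul]
          rw [← hxy]
          abel
      _ = d - t := by
          rw [norm_smul, hvnorm, mul_one, Real.norm_eq_abs, abs_of_nonpos (by linarith [ht.2])]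
          ring
  have hC : ∀ t ∈ Set.Icc (0 : ℝ) d, ‖g n t‖ ≤ M * (d - t) ^ κ := by
    intro t ht
    refine le_trans (hder v hvnorm (x + t • v)) ?_
    gcongr
    · exact Metric.infDist_nonneg
    · exact hdist t ht
  -- main downward induction
  have key : ∀ j : ℕ, j ≤ n → ∀ t ∈ Set.Icc (0 : ℝ) d,
      ‖g (n - j) t‖ ≤ M * (d - t) ^ (κ + j) := by
    intro j
    induction j with
    | zero => intro _ t ht; simpa using hC t ht
    | succ j ih =>
      intro hj t ht
      have hj' : j ≤ n := le_of_lt (Nat.lt_of_succ_le hj)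
      set k := n - (j + 1) with hk
      have hk1 : k + 1 = n - j := by omega
      set β : ℝ := κ + j with hβ
      have hβ0 : 0 < β := by positivity
      -- FTC
      have hint : (∫ s in t..d, g (k + 1) s) = g k d - g k t :=
        intervalIntegral.integral_eq_sub_of_hasDerivAt (fun s _ => hA k s)
          ((hgc (k + 1)).intervalIntegrable t d)
      have hgt : ‖g k t‖ = ‖∫ s in t..d, g (k + 1) s‖ := by
        rw [hint, hB k, zero_sub, norm_neg]
      have htd : t ≤ d := ht.2
      have hbound : ∀ s ∈ Set.Icc t d, ‖g (k + 1) s‖ ≤ M * (d - s) ^ β := by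
        intro s hs
        have hs' : s ∈ Set.Icc (0 : ℝ) d := ⟨le_trans ht.1 hs.1, hs.2⟩
        have := ih hj' s hs'
        rwa [hk1]
      have hIle : ‖∫ s in t..d, g (k + 1) s‖ ≤ ∫ s in t..d, M * (d - s) ^ β := by
        refine le_trans (intervalIntegral.norm_integral_le_integral_norm htd) ?_
        refine intervalIntegral.integral_mono_on htd
          (((hgc (k + 1)).norm).intervalIntegrable t d) ?_ hbound
        exact (Continuous.intervalIntegrable (by
          exact continuous_const.mul ((Real.continuous_rpow_const hβ0.le).comp
            (continuous_const.sub continuous_id))) t d)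
      have hcalc : (∫ s in t..d, M * (d - s) ^ β) = M * ((d - t) ^ (β + 1) / (β + 1)) := by
        rw [intervalIntegral.integral_const_mul]
        congr 1
        have : (∫ s in t..d, (d - s) ^ β) = ∫ s in (d - d)..(d - t), s ^ β :=
          intervalIntegral.integral_comp_sub_left (fun s => s ^ β) d
        rw [this, sub_self, integral_rpow (Or.inl (by linarith))]
        rw [Real.zero_rpow (by positivity)]
        ring
      have hfin : M * ((d - t) ^ (β + 1) / (β + 1)) ≤ M * (d - t) ^ (β + 1) := by
        refine mul_le_mul_of_nonneg_left ?_ hM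
        refine div_le_self (Real.rpow_nonneg (by linarith [ht.2]) _) (by linarith)
      have hexp : β + 1 = κ + (j + 1 : ℕ) := by push_cast; ring
      calc ‖g k t‖ = ‖∫ s in t..d, g (k + 1) s‖ := hgt
        _ ≤ ∫ s in t..d, M * (d - s) ^ β := hIle
        _ = M * ((d - t) ^ (β + 1) / (β + 1)) := hcalc
        _ ≤ M * (d - t) ^ (β + 1) := hfin
        _ = M * (d - t) ^ (κ + (j + 1 : ℕ)) := by rw [hexp]
  have hfinal := key n le_rfl 0 ⟨le_rfl, hd0.le⟩
  have hg00 : g (n - n) 0 = f x := by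
    rw [hg, Nat.sub_self]
    simp [iteratedFDeriv_zero_apply]
  rw [hg00] at hfinal
  have : M * (d - 0) ^ (κ + (n : ℝ)) = M * d ^ ((n : ℝ) + κ) := by
    rw [sub_zero, add_comm]
  rwa [this] at hfinal
end

section
/- Let N and m be positive integers with 2m > N. There exists a constant c > 0 depending only on N and m such that for every ε with 0 < ε ≤ 1 − N/(2m), setting γ = m(1−ε) − N/2, and for every Schwartz function f : ℝ^N → ℂ, ∫_{ℝ^N} |ξ|^γ |f̂(ξ)| dξ ≤ (c/√ε) · (∫_{ℝ^N} |ξ|^{2m} |f̂(ξ)|² dξ)^{(1−ε)/2} · (∫_{ℝ^N} |f̂(ξ)|² dξ)^{ε/2}. -/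
open MeasureTheory Metric Set
open scoped FourierTransform


lemma tail_integral (N : ℕ) (hN : 0 < N) (c s : ℝ) (hc : 0 < c) (hs : 0 < s) :
    ∫ x : EuclideanSpace ℝ (Fin N),
        Set.indicator (Set.Ioi c) (fun r => r ^ (-(N : ℝ) - s)) ‖x‖
      = N * (volume (ball (0 : EuclideanSpace ℝ (Fin N)) 1)).toReal * (c ^ (-s) / s) := by
  haveI : Nontrivial (EuclideanSpace ℝ (Fin N)) :=
    Module.nontrivial_of_finrank_pos (R := ℝ) (by rw [finrank_euclideanSpace_fin]; exact hN)
  rw [integral_fun_norm_addHaar volume (Set.indicator (Set.Ioi c) (fun r => r ^ (-(N : ℝ) - s)))]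
  rw [finrank_euclideanSpace_fin]
  have h1 : ∀ y : ℝ, y ^ (N - 1) • Set.indicator (Set.Ioi c) (fun r => r ^ (-(N : ℝ) - s)) y
      = Set.indicator (Set.Ioi c) (fun r => r ^ (N - 1) * r ^ (-(N : ℝ) - s)) y := by
    intro y
    by_cases hy : y ∈ Set.Ioi c <;> simp [hy, smul_eq_mul]
  simp only [h1]
  rw [setIntegral_indicator measurableSet_Ioi, Set.Ioi_inter_Ioi, max_eq_right hc.le]
  have h2 : ∀ y ∈ Set.Ioi c, y ^ (N - 1) * y ^ (-(N : ℝ) - s) = y ^ (-1 - s) := by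
    intro y hy
    have hy0 : 0 < y := hc.trans hy
    rw [← Real.rpow_natCast y (N - 1), ← Real.rpow_add hy0]
    congr 1
    have : ((N - 1 : ℕ) : ℝ) = (N : ℝ) - 1 := by
      push_cast [Nat.cast_sub hN]; ring
    rw [this]; ring
  rw [setIntegral_congr_fun measurableSet_Ioi h2,
    integral_Ioi_rpow_of_lt (by linarith) hc]
  have : -1 - s + 1 = -s := by ring
  rw [this]
  rw [nsmul_eq_mul, smul_eq_mul]
  simp only [measureReal_def]
  field_simp


lemma tail_integrable (N : ℕ) (c s : ℝ) (hc : 0 < c) (hs : 0 < s) :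
    Integrable (fun x : EuclideanSpace ℝ (Fin N) =>
      Set.indicator (Set.Ioi c) (fun r => r ^ (-(N : ℝ) - s)) ‖x‖) := by
  have hr : (Module.finrank ℝ (EuclideanSpace ℝ (Fin N)) : ℝ) < (N : ℝ) + s := by
    rw [finrank_euclideanSpace_fin]; linarith
  have hint := (integrable_one_add_norm (E := EuclideanSpace ℝ (Fin N)) (μ := volume) hr).const_mul
      ((1 + c⁻¹) ^ ((N : ℝ) + s))
  refine hint.mono' ?_ ?_
  · apply Measurable.aestronglyMeasurable
    exact (Measurable.indicator (by fun_prop) measurableSet_Ioi).comp measurable_norm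
  · filter_upwards with x
    by_cases hx : ‖x‖ ∈ Set.Ioi c
    · rw [Set.indicator_of_mem hx]
      have hx0 : 0 < ‖x‖ := hc.trans hx
      have h1 : (0:ℝ) < 1 + ‖x‖ := by positivity
      rw [Real.norm_of_nonneg (Real.rpow_nonneg hx0.le _)]
      have key : (1 + ‖x‖) ≤ (1 + c⁻¹) * ‖x‖ := by
        have : (1:ℝ) ≤ c⁻¹ * ‖x‖ := by
          rw [← inv_mul_cancel₀ hc.ne']
          exact mul_le_mul_of_nonneg_left (le_of_lt hx) (by positivity)
        nlinarith [norm_nonneg x]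
      have h2 : (1 + ‖x‖) ^ (-((N:ℝ) + s)) ≥ ((1 + c⁻¹) * ‖x‖) ^ (-((N:ℝ) + s)) :=
        Real.rpow_le_rpow_of_nonpos h1 key (by linarith)
      have h3 : ((1 + c⁻¹) * ‖x‖) ^ (-((N:ℝ) + s))
          = ((1 + c⁻¹) ^ (-((N:ℝ) + s))) * ‖x‖ ^ (-((N:ℝ) + s)) :=
        Real.mul_rpow (by positivity) hx0.le
      have h4 : ‖x‖ ^ (-(N:ℝ) - s) = ‖x‖ ^ (-((N:ℝ) + s)) := by ring_nf
      rw [h4]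
      calc ‖x‖ ^ (-((N:ℝ) + s))
          = (1 + c⁻¹) ^ ((N : ℝ) + s) * ((1 + c⁻¹) ^ (-((N:ℝ) + s)) * ‖x‖ ^ (-((N:ℝ) + s))) := by
            rw [← mul_assoc, ← Real.rpow_add (by positivity : (0:ℝ) < 1 + c⁻¹)]
            rw [add_neg_cancel, Real.rpow_zero, one_mul]
        _ ≤ (1 + c⁻¹) ^ ((N : ℝ) + s) * (1 + ‖x‖) ^ (-((N:ℝ) + s)) := by
            rw [← h3]
            exact mul_le_mul_of_nonneg_left h2 (by positivity)
    · rw [Set.indicator_of_notMem hx]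
      simp only [norm_zero]
      positivity

noncomputable def Vb (N : ℕ) : ℝ := (volume (ball (0 : EuclideanSpace ℝ (Fin N)) 1)).toReal

lemma Vb_pos (N : ℕ) : 0 < Vb N :=
  ENNReal.toReal_pos (measure_ball_pos volume 0 one_pos).ne' measure_ball_lt_top.ne

lemma W_lemma (N m : ℕ) (hN : 0 < N) (hm : 0 < m) (γ ε μ : ℝ) (hε0 : 0 < ε) (hε1 : ε ≤ 1)
    (hγ : γ = m * (1 - ε) - N / 2) (hγ0 : 0 ≤ 2 * γ) (hNm : (N : ℝ) ≤ 2 * m) (hμ : 0 < μ) :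
    Integrable (fun x : EuclideanSpace ℝ (Fin N) => ‖x‖ ^ (2 * γ) * ((μ + ‖x‖ ^ 2) ^ m)⁻¹) ∧
    ∫ x : EuclideanSpace ℝ (Fin N), ‖x‖ ^ (2 * γ) * ((μ + ‖x‖ ^ 2) ^ m)⁻¹
      ≤ 2 * Vb N / ε * μ ^ (-(m : ℝ) * ε) := by
  have hVb := Vb_pos N
  set c : ℝ := Real.sqrt μ with hcdef
  have hcpos : 0 < c := Real.sqrt_pos.2 hμ
  set s : ℝ := 2 * m * ε with hsdef
  have hs : 0 < s := by positivity
  set G : EuclideanSpace ℝ (Fin N) → ℝ := fun x =>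
    Set.indicator (closedBall (0 : EuclideanSpace ℝ (Fin N)) c) (fun _ => μ ^ (γ - m)) x +
    Set.indicator (Set.Ioi c) (fun r => r ^ (-(N : ℝ) - s)) ‖x‖ with hGdef
  have hG1 : Integrable (fun x : EuclideanSpace ℝ (Fin N) =>
      Set.indicator (closedBall (0 : EuclideanSpace ℝ (Fin N)) c) (fun _ => μ ^ (γ - m)) x) := by
    rw [integrable_indicator_iff measurableSet_closedBall]
    exact integrableOn_const measure_closedBall_lt_top.ne
  have hG2 := tail_integrable N c s hcpos hs
  have hGint : Integrable G := hG1.add hG2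
  -- pointwise bound
  have hle : ∀ x : EuclideanSpace ℝ (Fin N),
      ‖x‖ ^ (2 * γ) * ((μ + ‖x‖ ^ 2) ^ m)⁻¹ ≤ G x := by
    intro x
    have hb : (0:ℝ) < μ + ‖x‖ ^ 2 := by positivity
    by_cases hx : ‖x‖ ≤ c
    · have h₁ : ‖x‖ ^ (2 * γ) ≤ μ ^ γ := by
        calc ‖x‖ ^ (2 * γ) ≤ c ^ (2 * γ) :=
              Real.rpow_le_rpow (norm_nonneg x) hx hγ0
          _ = μ ^ γ := by
              rw [hcdef, Real.sqrt_eq_rpow, ← Real.rpow_mul hμ.le]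
              ring_nf
      have h₂ : ((μ + ‖x‖ ^ 2) ^ m)⁻¹ ≤ (μ ^ m)⁻¹ := by
        apply inv_anti₀ (pow_pos hμ m)
        exact pow_le_pow_left₀ hμ.le (le_add_of_nonneg_right (sq_nonneg _)) m
      have h₃ : ‖x‖ ^ (2 * γ) * ((μ + ‖x‖ ^ 2) ^ m)⁻¹ ≤ μ ^ γ * (μ ^ m)⁻¹ := by
        apply mul_le_mul h₁ h₂ (by positivity) (Real.rpow_nonneg hμ.le _)
      have h₄ : μ ^ γ * (μ ^ m)⁻¹ = μ ^ (γ - (m:ℝ)) := by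
        rw [Real.rpow_sub hμ, Real.rpow_natCast, div_eq_mul_inv]
      rw [hGdef]
      simp only
      rw [Set.indicator_of_mem (by simpa [Metric.mem_closedBall, dist_zero_right] using hx),
        Set.indicator_of_notMem (by simpa using hx)]
      rw [add_zero]
      rw [h₄] at h₃
      exact h₃
    · push_neg at hx
      have hx0 : 0 < ‖x‖ := hcpos.trans hx
      have h₂ : ((μ + ‖x‖ ^ 2) ^ m)⁻¹ ≤ ((‖x‖ ^ 2) ^ m)⁻¹ := by
        apply inv_anti₀ (by positivity)
        exact pow_le_pow_left₀ (by positivity) (le_add_of_nonneg_left hμ.le) m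
      have h₃ : ‖x‖ ^ (2 * γ) * ((μ + ‖x‖ ^ 2) ^ m)⁻¹ ≤ ‖x‖ ^ (2 * γ) * ((‖x‖ ^ 2) ^ m)⁻¹ :=
        mul_le_mul_of_nonneg_left h₂ (Real.rpow_nonneg (norm_nonneg x) _)
      have h₄ : ‖x‖ ^ (2 * γ) * ((‖x‖ ^ 2) ^ m)⁻¹ = ‖x‖ ^ (-(N:ℝ) - s) := by
        rw [← pow_mul, ← Real.rpow_natCast ‖x‖ (2 * m), ← Real.rpow_neg (norm_nonneg x),
          ← Real.rpow_add hx0]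
        congr 1
        push_cast
        rw [hγ, hsdef]; ring
      rw [hGdef]
      simp only
      rw [Set.indicator_of_notMem (by simpa [Metric.mem_closedBall, dist_zero_right] using hx),
        Set.indicator_of_mem (by simpa using hx)]
      rw [zero_add]
      rw [h₄] at h₃
      exact h₃
  -- integrability of the weight
  have hmeas : Measurable (fun x : EuclideanSpace ℝ (Fin N) =>
      ‖x‖ ^ (2 * γ) * ((μ + ‖x‖ ^ 2) ^ m)⁻¹) := by fun_prop
  have hWint : Integrable (fun x : EuclideanSpace ℝ (Fin N) =>
      ‖x‖ ^ (2 * γ) * ((μ + ‖x‖ ^ 2) ^ m)⁻¹) := by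
    apply hGint.mono' hmeas.aestronglyMeasurable
    filter_upwards with x
    rw [Real.norm_of_nonneg (by positivity)]
    exact hle x
  refine ⟨hWint, ?_⟩
  have hIG : ∫ x : EuclideanSpace ℝ (Fin N), G x
      = (volume (closedBall (0 : EuclideanSpace ℝ (Fin N)) c)).toReal * μ ^ (γ - (m:ℝ))
        + N * Vb N * (c ^ (-s) / s) := by
    rw [hGdef, integral_add hG1 hG2, integral_indicator_const _ measurableSet_closedBall,
      tail_integral N hN c s hcpos hs]
    rw [smul_eq_mul]
    rfl
  have hvol : (volume (closedBall (0 : EuclideanSpace ℝ (Fin N)) c)).toReal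
      = μ ^ ((N:ℝ)/2) * Vb N := by
    rw [Measure.addHaar_closedBall _ _ hcpos.le, ENNReal.toReal_mul,
      ENNReal.toReal_ofReal (by positivity), finrank_euclideanSpace_fin]
    congr 1
    rw [hcdef, Real.sqrt_eq_rpow, ← Real.rpow_natCast (μ ^ (1/2:ℝ)) N, ← Real.rpow_mul hμ.le]
    congr 1
    ring
  have hcs : c ^ (-s) = μ ^ (-(m:ℝ) * ε) := by
    rw [hcdef, Real.sqrt_eq_rpow, ← Real.rpow_mul hμ.le]
    congr 1
    rw [hsdef]; ring
  have hfirst : μ ^ ((N:ℝ)/2) * Vb N * μ ^ (γ - (m:ℝ)) = Vb N * μ ^ (-(m:ℝ) * ε) := by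
    rw [mul_comm (μ ^ ((N:ℝ)/2)) (Vb N), mul_assoc, ← Real.rpow_add hμ]
    congr 2
    rw [hγ]; ring
  calc ∫ x : EuclideanSpace ℝ (Fin N), ‖x‖ ^ (2 * γ) * ((μ + ‖x‖ ^ 2) ^ m)⁻¹
      ≤ ∫ x : EuclideanSpace ℝ (Fin N), G x := integral_mono hWint hGint hle
    _ = Vb N * μ ^ (-(m:ℝ) * ε) + N * Vb N * (μ ^ (-(m:ℝ) * ε) / s) := by
        rw [hIG, hvol, hfirst, hcs]
    _ ≤ 2 * Vb N / ε * μ ^ (-(m:ℝ) * ε) := by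
        have hμε : 0 < μ ^ (-(m:ℝ) * ε) := Real.rpow_pos_of_pos hμ _
        have h1 : Vb N * μ ^ (-(m:ℝ) * ε) ≤ Vb N / ε * μ ^ (-(m:ℝ) * ε) := by
          apply mul_le_mul_of_nonneg_right _ hμε.le
          rw [le_div_iff₀ hε0]
          nlinarith
        have h2 : (N:ℝ) * Vb N * (μ ^ (-(m:ℝ) * ε) / s) ≤ Vb N / ε * μ ^ (-(m:ℝ) * ε) := by
          rw [hsdef]
          rw [div_eq_mul_inv, div_eq_mul_inv]
          have hNs : (N:ℝ) * Vb N * (μ ^ (-(m:ℝ) * ε) * (2 * (m:ℝ) * ε)⁻¹)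
              = (N:ℝ) / (2 * m) * (Vb N * ε⁻¹ * μ ^ (-(m:ℝ) * ε)) := by
            field_simp
          rw [hNs]
          have : (N:ℝ) / (2 * m) ≤ 1 := by
            rw [div_le_one (by positivity)]
            exact hNm
          nlinarith [mul_pos (mul_pos hVb (inv_pos.2 hε0)) hμε]
        calc Vb N * μ ^ (-(m:ℝ) * ε) + (N:ℝ) * Vb N * (μ ^ (-(m:ℝ) * ε) / s)
            ≤ Vb N / ε * μ ^ (-(m:ℝ) * ε) + Vb N / ε * μ ^ (-(m:ℝ) * ε) := add_le_add h1 h2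
          _ = 2 * Vb N / ε * μ ^ (-(m:ℝ) * ε) := by ring

lemma pow_add_le_aux (a t : ℝ) (ha : 0 ≤ a) (ht : 0 ≤ t) (m : ℕ) :
    (a + t) ^ m ≤ 2 ^ m * a ^ m + 2 ^ m * t ^ m := by
  have h1 : a + t ≤ 2 * max a t := by
    rw [two_mul]; exact add_le_add (le_max_left _ _) (le_max_right _ _)
  calc (a+t)^m ≤ (2 * max a t)^m := pow_le_pow_left₀ (by positivity) h1 m
    _ = 2^m * (max a t)^m := mul_pow 2 _ m
    _ ≤ 2^m * a^m + 2^m * t^m := by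
        rcases max_cases a t with ⟨h,_⟩|⟨h,_⟩ <;> rw [h] <;>
          nlinarith [mul_nonneg (pow_nonneg (by norm_num : (0:ℝ) ≤ 2) m) (pow_nonneg ha m),
            mul_nonneg (pow_nonneg (by norm_num : (0:ℝ) ≤ 2) m) (pow_nonneg ht m)]

/-- The core interpolation inequality in the proof of Lemma 1 of the paper: with
`γ = m(1-ε) - N/2`,
`∫ |ξ|^γ |𝓕f(ξ)| dξ ≤ (c/√ε) (∫ |ξ|^{2m} |𝓕f(ξ)|² dξ)^{(1-ε)/2} (∫ |𝓕f(ξ)|² dξ)^{ε/2}`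
for a constant `c` depending only on `N` and `m`. -/
theorem stmt5 (N m : ℕ) (hN : 0 < N) (hm : 0 < m) (hNm : N < 2 * m) :
    ∃ c : ℝ, 0 < c ∧
      ∀ ε : ℝ, 0 < ε → ε ≤ 1 - (N : ℝ) / (2 * m) →
        ∀ f : SchwartzMap (EuclideanSpace ℝ (Fin N)) ℂ,
          (∫ ξ, ‖ξ‖ ^ ((m : ℝ) * (1 - ε) - (N : ℝ) / 2) * ‖𝓕 (⇑f) ξ‖) ≤
            c / Real.sqrt ε *
              (∫ ξ, ‖ξ‖ ^ (2 * m) * ‖𝓕 (⇑f) ξ‖ ^ 2) ^ ((1 - ε) / 2) *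
              (∫ ξ, ‖𝓕 (⇑f) ξ‖ ^ 2) ^ (ε / 2) := by
  have hVb := Vb_pos N
  have hm' : (0:ℝ) < m := by exact_mod_cast hm
  have hNm' : (N:ℝ) < 2 * m := by exact_mod_cast hNm
  have hN' : (0:ℝ) < N := by exact_mod_cast hN
  refine ⟨Real.sqrt (2 ^ (m + 2) * Vb N), Real.sqrt_pos.2 (by positivity), ?_⟩
  intro ε hε0 hε1 f
  have hεlt1 : ε < 1 := lt_of_le_of_lt hε1 (by
    have : 0 < (N:ℝ) / (2*m) := by positivity
    linarith)
  have hε1' : ε ≤ 1 := hεlt1.le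
  set γ : ℝ := (m:ℝ) * (1 - ε) - (N:ℝ)/2 with hγdef
  clear_value γ
  have hγ0 : 0 ≤ 2 * γ := by
    have h2m : (0:ℝ) < 2*m := by positivity
    have h' : (N:ℝ)/(2*m) ≤ 1 - ε := by linarith
    rw [div_le_iff₀ h2m] at h'
    rw [hγdef]; nlinarith
  set g : SchwartzMap (EuclideanSpace ℝ (Fin N)) ℂ := 𝓕 f with hgdef
  have hFg : 𝓕 ⇑f = ⇑g := (SchwartzMap.fourier_coe f).symm
  rw [hFg]
  set A : ℝ := ∫ ξ : EuclideanSpace ℝ (Fin N), ‖ξ‖ ^ (2 * m) * ‖g ξ‖ ^ 2 with hAdef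
  set B : ℝ := ∫ ξ : EuclideanSpace ℝ (Fin N), ‖g ξ‖ ^ 2 with hBdef
  set C : ℝ := SchwartzMap.seminorm ℝ 0 0 g with hCdef
  have hC0 : 0 ≤ C := apply_nonneg _ _
  have hgb : ∀ ξ, ‖g ξ‖ ≤ C := fun ξ => SchwartzMap.norm_le_seminorm ℝ g ξ
  clear_value A B C
  have hiA : Integrable (fun ξ : EuclideanSpace ℝ (Fin N) => ‖ξ‖ ^ (2 * m) * ‖g ξ‖ ^ 2) := by
    refine ((g.integrable_pow_mul volume (2*m)).const_mul C).mono' ?_ ?_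
    · exact ((continuous_norm.pow _).mul ((g.continuous.norm).pow 2)).aestronglyMeasurable
    · filter_upwards with ξ
      rw [Real.norm_of_nonneg (by positivity)]
      have h1 : ‖g ξ‖ ^ 2 ≤ C * ‖g ξ‖ := by
        rw [pow_two]
        exact mul_le_mul_of_nonneg_right (hgb ξ) (norm_nonneg _)
      calc ‖ξ‖ ^ (2*m) * ‖g ξ‖ ^ 2 ≤ ‖ξ‖ ^ (2*m) * (C * ‖g ξ‖) :=
            mul_le_mul_of_nonneg_left h1 (by positivity)
        _ = C * (‖ξ‖ ^ (2*m) * ‖g ξ‖) := by ring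
  have hiB : Integrable (fun ξ : EuclideanSpace ℝ (Fin N) => ‖g ξ‖ ^ 2) := by
    refine (g.integrable.norm.const_mul C).mono' ?_ ?_
    · exact ((g.continuous.norm).pow 2).aestronglyMeasurable
    · filter_upwards with ξ
      rw [Real.norm_of_nonneg (by positivity), pow_two]
      exact mul_le_mul_of_nonneg_right (hgb ξ) (norm_nonneg _)
  have hA0 : 0 ≤ A := by
    rw [hAdef]; exact integral_nonneg (fun ξ => by positivity)
  have hB0 : 0 ≤ B := by
    rw [hBdef]; exact integral_nonneg (fun ξ => by positivity)
  rcases eq_or_lt_of_le hB0 with hB | hBpos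
  · -- degenerate case : B = 0
    have hB' : ∫ ξ : EuclideanSpace ℝ (Fin N), ‖g ξ‖ ^ 2 = 0 := by rw [← hBdef]; exact hB.symm
    have hz : (fun ξ : EuclideanSpace ℝ (Fin N) => ‖g ξ‖ ^ 2) =ᵐ[volume] 0 :=
      (integral_eq_zero_iff_of_nonneg (fun ξ => by positivity) hiB).1 hB'
    have hz' : ∀ᵐ ξ : EuclideanSpace ℝ (Fin N) ∂volume, ‖g ξ‖ = 0 := by
      filter_upwards [hz] with ξ h
      simpa [pow_eq_zero_iff] using h
    have hLHS : ∫ ξ : EuclideanSpace ℝ (Fin N), ‖ξ‖ ^ γ * ‖g ξ‖ = 0 := by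
      rw [show (0:ℝ) = ∫ _ : EuclideanSpace ℝ (Fin N), (0:ℝ) by simp]
      apply integral_congr_ae
      filter_upwards [hz'] with ξ h
      simp [h]
    have hAz : A = 0 := by
      rw [hAdef, show (0:ℝ) = ∫ _ : EuclideanSpace ℝ (Fin N), (0:ℝ) by simp]
      apply integral_congr_ae
      filter_upwards [hz'] with ξ h
      simp [h]
    rw [hLHS, hAz, ← hB, Real.zero_rpow (by linarith : (0:ℝ) < (1 - ε)/2).ne',
      Real.zero_rpow (by positivity : (0:ℝ) < ε/2).ne']
    simp
  · -- main case
    have hApos : 0 < A := by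
      rcases eq_or_lt_of_le hA0 with hA | hA
      · exfalso
        have hA' : ∫ ξ : EuclideanSpace ℝ (Fin N), ‖ξ‖ ^ (2*m) * ‖g ξ‖ ^ 2 = 0 := by
          rw [← hAdef]; exact hA.symm
        have hz : (fun ξ : EuclideanSpace ℝ (Fin N) => ‖ξ‖ ^ (2*m) * ‖g ξ‖ ^ 2) =ᵐ[volume] 0 :=
          (integral_eq_zero_iff_of_nonneg (fun ξ => by positivity) hiA).1 hA'
        have hne : ∀ᵐ ξ : EuclideanSpace ℝ (Fin N) ∂volume, ξ ≠ 0 := by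
          haveI : Nontrivial (EuclideanSpace ℝ (Fin N)) :=
            Module.nontrivial_of_finrank_pos (R := ℝ)
              (by rw [finrank_euclideanSpace_fin]; exact hN)
          rw [ae_iff]
          have : {ξ : EuclideanSpace ℝ (Fin N) | ¬ξ ≠ 0} = {0} := by ext ξ; simp
          rw [this]
          exact measure_singleton 0
        have hz2 : (fun ξ : EuclideanSpace ℝ (Fin N) => ‖g ξ‖ ^ 2) =ᵐ[volume] 0 := by
          filter_upwards [hz, hne] with ξ h hξ
          have hn : ‖ξ‖ ^ (2*m) ≠ 0 := pow_ne_zero _ (norm_ne_zero_iff.2 hξ)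
          have := mul_eq_zero.1 h
          tauto
        have : B = 0 := by
          rw [hBdef, show (0:ℝ) = ∫ _ : EuclideanSpace ℝ (Fin N), (0:ℝ) by simp]
          exact integral_congr_ae hz2
        exact absurd this hBpos.ne'
      · exact hA
    set μ₀ : ℝ := (A/B) ^ ((m:ℝ)⁻¹) with hμ₀def
    clear_value μ₀
    have hμ₀ : 0 < μ₀ := by
      rw [hμ₀def]; exact Real.rpow_pos_of_pos (div_pos hApos hBpos) _
    have hμ₀m : μ₀ ^ m = A / B := by
      rw [hμ₀def, ← Real.rpow_natCast ((A/B) ^ ((m:ℝ)⁻¹)) m,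
        ← Real.rpow_mul (div_nonneg hA0 hB0), inv_mul_cancel₀ hm'.ne', Real.rpow_one]
    obtain ⟨hWint, hWle⟩ := W_lemma N m hN hm γ ε μ₀ hε0 hε1' hγdef hγ0 hNm'.le hμ₀
    set u : EuclideanSpace ℝ (Fin N) → ℝ :=
      fun ξ => ‖ξ‖ ^ γ * (Real.sqrt ((μ₀ + ‖ξ‖ ^ 2) ^ m))⁻¹ with hudef
    set v : EuclideanSpace ℝ (Fin N) → ℝ :=
      fun ξ => Real.sqrt ((μ₀ + ‖ξ‖ ^ 2) ^ m) * ‖g ξ‖ with hvdef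
    clear_value u v
    have hPpos : ∀ ξ : EuclideanSpace ℝ (Fin N), (0:ℝ) < (μ₀ + ‖ξ‖ ^ 2) ^ m := fun ξ =>
      pow_pos (add_pos_of_pos_of_nonneg hμ₀ (sq_nonneg _)) m
    have hsq : ∀ ξ, (0:ℝ) < Real.sqrt ((μ₀ + ‖ξ‖ ^ 2) ^ m) := fun ξ => Real.sqrt_pos.2 (hPpos ξ)
    have huv : ∀ ξ, ‖ξ‖ ^ γ * ‖g ξ‖ = u ξ * v ξ := by
      intro ξ
      rw [hudef, hvdef]
      simp only
      rw [mul_assoc, ← mul_assoc (Real.sqrt _)⁻¹, inv_mul_cancel₀ (hsq ξ).ne', one_mul]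
    have hu2 : ∀ ξ, u ξ ^ 2 = ‖ξ‖ ^ (2*γ) * ((μ₀ + ‖ξ‖ ^ 2) ^ m)⁻¹ := by
      intro ξ
      rw [hudef]
      simp only
      rw [mul_pow, ← Real.rpow_natCast (‖ξ‖ ^ γ) 2, ← Real.rpow_mul (norm_nonneg ξ),
        inv_pow, Real.sq_sqrt (hPpos ξ).le]
      have : γ * ((2:ℕ):ℝ) = 2 * γ := by push_cast; ring
      rw [this]
    have hv2 : ∀ ξ, v ξ ^ 2 = (μ₀ + ‖ξ‖ ^ 2) ^ m * ‖g ξ‖ ^ 2 := by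
      intro ξ
      rw [hvdef]
      simp only
      rw [mul_pow, Real.sq_sqrt (hPpos ξ).le]
    have hpt : ∀ ξ : EuclideanSpace ℝ (Fin N),
        (μ₀ + ‖ξ‖ ^ 2) ^ m ≤ 2 ^ m * μ₀ ^ m + 2 ^ m * ‖ξ‖ ^ (2*m) := by
      intro ξ
      have h := pow_add_le_aux μ₀ (‖ξ‖^2) hμ₀.le (sq_nonneg _) m
      rwa [← pow_mul] at h
    have hle2 : ∀ ξ : EuclideanSpace ℝ (Fin N), (μ₀ + ‖ξ‖ ^ 2) ^ m * ‖g ξ‖ ^ 2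
        ≤ 2^m*μ₀^m * ‖g ξ‖^2 + 2^m*(‖ξ‖^(2*m) * ‖g ξ‖^2) := by
      intro ξ
      have := mul_le_mul_of_nonneg_right (hpt ξ) (by positivity : (0:ℝ) ≤ ‖g ξ‖^2)
      calc (μ₀ + ‖ξ‖^2)^m * ‖g ξ‖^2 ≤ (2^m*μ₀^m + 2^m*‖ξ‖^(2*m)) * ‖g ξ‖^2 := this
        _ = 2^m*μ₀^m * ‖g ξ‖^2 + 2^m*(‖ξ‖^(2*m) * ‖g ξ‖^2) := by ring
    have hdom : Integrable (fun ξ : EuclideanSpace ℝ (Fin N) =>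
        2^m*μ₀^m * ‖g ξ‖^2 + 2^m*(‖ξ‖^(2*m) * ‖g ξ‖^2)) :=
      (hiB.const_mul (2^m*μ₀^m)).add (hiA.const_mul (2^m))
    have hv2int : Integrable (fun ξ : EuclideanSpace ℝ (Fin N) =>
        (μ₀ + ‖ξ‖ ^ 2) ^ m * ‖g ξ‖ ^ 2) := by
      refine hdom.mono' ?_ ?_
      · exact (((continuous_const.add (continuous_norm.pow 2)).pow m).mul
          ((g.continuous.norm).pow 2)).aestronglyMeasurable
      · filter_upwards with ξ
        rw [Real.norm_of_nonneg (by positivity)]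
        exact hle2 ξ
    have hv2val : ∫ ξ : EuclideanSpace ℝ (Fin N), (μ₀ + ‖ξ‖ ^ 2) ^ m * ‖g ξ‖ ^ 2
        ≤ 2^(m+1) * A := by
      calc ∫ ξ : EuclideanSpace ℝ (Fin N), (μ₀ + ‖ξ‖ ^ 2) ^ m * ‖g ξ‖ ^ 2
          ≤ ∫ ξ : EuclideanSpace ℝ (Fin N),
              (2^m*μ₀^m * ‖g ξ‖^2 + 2^m*(‖ξ‖^(2*m) * ‖g ξ‖^2)) :=
            integral_mono hv2int hdom hle2
        _ = 2^m*μ₀^m * B + 2^m * A := by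
            rw [integral_add (hiB.const_mul _) (hiA.const_mul _), integral_const_mul,
              integral_const_mul, ← hBdef, ← hAdef]
        _ = 2^(m+1) * A := by
            rw [hμ₀m]
            field_simp
            ring
    -- Memℒp statements
    have humeas : AEStronglyMeasurable u volume := by
      rw [hudef]
      apply Measurable.aestronglyMeasurable
      fun_prop
    have hvmeas : AEStronglyMeasurable v volume := by
      rw [hvdef]
      exact ((Real.continuous_sqrt.comp
        ((continuous_const.add (continuous_norm.pow 2)).pow m)).mul
        (g.continuous.norm)).aestronglyMeasurable
    have hu2int : Integrable (fun ξ : EuclideanSpace ℝ (Fin N) => u ξ ^ 2) := by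
      rw [show (fun ξ : EuclideanSpace ℝ (Fin N) => u ξ ^ 2)
          = fun ξ => ‖ξ‖ ^ (2*γ) * ((μ₀ + ‖ξ‖ ^ 2) ^ m)⁻¹ from funext hu2]
      exact hWint
    have hMu : MemLp u (ENNReal.ofReal 2) volume := by
      rw [show ENNReal.ofReal (2:ℝ) = 2 by norm_num]
      exact (memLp_two_iff_integrable_sq humeas).2 hu2int
    have hMv : MemLp v (ENNReal.ofReal 2) volume := by
      rw [show ENNReal.ofReal (2:ℝ) = 2 by norm_num]
      refine (memLp_two_iff_integrable_sq hvmeas).2 ?_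
      rw [show (fun ξ : EuclideanSpace ℝ (Fin N) => v ξ ^ 2)
          = fun ξ => (μ₀ + ‖ξ‖ ^ 2) ^ m * ‖g ξ‖ ^ 2 from funext hv2]
      exact hv2int
    have hunn : 0 ≤ᵐ[volume] u := Filter.Eventually.of_forall (by
      intro ξ; rw [hudef]; simp only; positivity)
    have hvnn : 0 ≤ᵐ[volume] v := Filter.Eventually.of_forall (by
      intro ξ; rw [hvdef]; simp only; positivity)
    have hHolder := integral_mul_le_Lp_mul_Lq_of_nonneg
      (Real.holderConjugate_iff.mpr ⟨one_lt_two, by norm_num⟩ : Real.HolderConjugate 2 2) hunn hvnn hMu hMv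
    have h2 : ∀ x:ℝ, x ^ (2:ℝ) = x ^ (2:ℕ) := fun x => by
      rw [show (2:ℝ) = ((2:ℕ):ℝ) by norm_num, Real.rpow_natCast]
    simp only [h2] at hHolder
    have hu2nn : 0 ≤ ∫ ξ : EuclideanSpace ℝ (Fin N), u ξ ^ 2 :=
      integral_nonneg fun ξ => sq_nonneg _
    have hv2nn : 0 ≤ ∫ ξ : EuclideanSpace ℝ (Fin N), v ξ ^ 2 :=
      integral_nonneg fun ξ => sq_nonneg _
    have hWB : ∫ ξ : EuclideanSpace ℝ (Fin N), u ξ ^ 2 ≤ 2 * Vb N / ε * μ₀ ^ (-(m:ℝ)*ε) := by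
      rw [show (fun ξ : EuclideanSpace ℝ (Fin N) => u ξ ^ 2)
          = fun ξ => ‖ξ‖ ^ (2*γ) * ((μ₀ + ‖ξ‖ ^ 2) ^ m)⁻¹ from funext hu2]
      exact hWle
    have hVB : ∫ ξ : EuclideanSpace ℝ (Fin N), v ξ ^ 2 ≤ 2^(m+1) * A := by
      rw [show (fun ξ : EuclideanSpace ℝ (Fin N) => v ξ ^ 2)
          = fun ξ => (μ₀ + ‖ξ‖ ^ 2) ^ m * ‖g ξ‖ ^ 2 from funext hv2]
      exact hv2val
    have step1 : (∫ ξ : EuclideanSpace ℝ (Fin N), u ξ ^ 2) ^ ((1:ℝ)/2)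
        ≤ (2 * Vb N / ε * μ₀ ^ (-(m:ℝ)*ε)) ^ ((1:ℝ)/2) :=
      Real.rpow_le_rpow hu2nn hWB (by norm_num)
    have step2 : (∫ ξ : EuclideanSpace ℝ (Fin N), v ξ ^ 2) ^ ((1:ℝ)/2)
        ≤ (2^(m+1) * A) ^ ((1:ℝ)/2) :=
      Real.rpow_le_rpow hv2nn hVB (by norm_num)
    have main : ∫ ξ : EuclideanSpace ℝ (Fin N), ‖ξ‖ ^ γ * ‖g ξ‖
        ≤ (2*Vb N/ε*μ₀^(-(m:ℝ)*ε))^((1:ℝ)/2) * (2^(m+1)*A)^((1:ℝ)/2) := by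
      calc ∫ ξ : EuclideanSpace ℝ (Fin N), ‖ξ‖ ^ γ * ‖g ξ‖
          = ∫ ξ : EuclideanSpace ℝ (Fin N), u ξ * v ξ := by simp only [huv]
        _ ≤ (∫ ξ : EuclideanSpace ℝ (Fin N), u ξ ^ 2) ^ ((1:ℝ)/2)
            * (∫ ξ : EuclideanSpace ℝ (Fin N), v ξ ^ 2) ^ ((1:ℝ)/2) := hHolder
        _ ≤ _ := mul_le_mul step1 step2 (Real.rpow_nonneg hv2nn _)
            (Real.rpow_nonneg (by positivity) _)
    -- final algebra
    have hμ₀e : μ₀ ^ (-(m:ℝ)*ε) = A ^ (-ε) * B ^ ε := by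
      rw [hμ₀def, ← Real.rpow_mul (div_nonneg hA0 hB0)]
      have he : (m:ℝ)⁻¹ * (-(m:ℝ)*ε) = -ε := by field_simp
      rw [he, Real.div_rpow hA0 hB0, div_eq_mul_inv, Real.rpow_neg hB0 ε, inv_inv]
    have hA1 : A ^ (-ε) * A = A ^ (1 - ε) := by
      nth_rewrite 2 [← Real.rpow_one A]
      rw [← Real.rpow_add hApos]
      congr 1
      ring
    have halg : (2*Vb N/ε*μ₀^(-(m:ℝ)*ε))^((1:ℝ)/2) * (2^(m+1)*A)^((1:ℝ)/2)
        = Real.sqrt (2^(m+2)*Vb N) / Real.sqrt ε * A^((1-ε)/2) * B^(ε/2) := by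
      rw [← Real.mul_rpow (by positivity) (by positivity)]
      rw [hμ₀e]
      rw [show 2*Vb N/ε*(A^(-ε)*B^ε)*(2^(m+1)*A)
          = 2^(m+2)*Vb N/ε * (A^(-ε)*A) * B^ε from by ring]
      rw [hA1]
      rw [Real.mul_rpow (by positivity) (Real.rpow_nonneg hB0 _),
        Real.mul_rpow (by positivity) (Real.rpow_nonneg hA0 _),
        ← Real.rpow_mul hA0, ← Real.rpow_mul hB0]
      rw [show (1-ε)*((1:ℝ)/2) = (1-ε)/2 from by ring, show ε*((1:ℝ)/2) = ε/2 from by ring]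
      congr 1
      congr 1
      rw [← Real.sqrt_eq_rpow, Real.sqrt_div (by positivity : (0:ℝ) ≤ 2^(m+2)*Vb N)]
    calc ∫ ξ : EuclideanSpace ℝ (Fin N), ‖ξ‖ ^ γ * ‖g ξ‖
        ≤ (2*Vb N/ε*μ₀^(-(m:ℝ)*ε))^((1:ℝ)/2) * (2^(m+1)*A)^((1:ℝ)/2) := main
      _ = Real.sqrt (2^(m+2)*Vb N) / Real.sqrt ε * A^((1-ε)/2) * B^(ε/2) := halg
end

section
/- Let N be a positive integer, let Ω be a bounded open subset of ℝ^N, and let p, q be real numbers with 0 < q < p. Then there exists a constant c > 0 (depending on Ω, p, q) such that for every smooth compactly supported function f : ℝ^N → ℂ with support contained in Ω, ∫_{ℝ^N} |ξ|^{2q} |f̂(ξ)|² dξ ≤ c ∫_{ℝ^N} |ξ|^{2p} |f̂(ξ)|² dξ. -/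
open MeasureTheory Bornology Metric
open scoped FourierTransform RealInnerProductSpace

noncomputable section Aux

variable {N : ℕ}

/-- A smooth compactly supported function is a Schwartz function. -/
noncomputable def toSchwartz (f : EuclideanSpace ℝ (Fin N) → ℂ)
    (hf : ContDiff ℝ (⊤ : ℕ∞) f) (h2f : HasCompactSupport f) :
    SchwartzMap (EuclideanSpace ℝ (Fin N)) ℂ where
  toFun := f
  smooth' := hf.of_le (by simp)
  decay' := by
    intro k n
    have hcont : Continuous fun x : EuclideanSpace ℝ (Fin N) =>
        ‖x‖ ^ k * ‖iteratedFDeriv ℝ n f x‖ :=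
      (continuous_norm.pow k).mul (hf.continuous_iteratedFDeriv (by exact_mod_cast le_top)).norm
    have hsupp : HasCompactSupport fun x : EuclideanSpace ℝ (Fin N) =>
        ‖x‖ ^ k * ‖iteratedFDeriv ℝ n f x‖ :=
      ((h2f.iteratedFDeriv n).norm).mul_left
    obtain ⟨C, hC⟩ := hcont.bounded_above_of_compact_support hsupp
    exact ⟨C, fun x => (le_abs_self _).trans ((Real.norm_eq_abs _) ▸ hC x)⟩

@[simp] lemma toSchwartz_apply (f : EuclideanSpace ℝ (Fin N) → ℂ)
    (hf : ContDiff ℝ (⊤ : ℕ∞) f) (h2f : HasCompactSupport f) :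
    ⇑(toSchwartz f hf h2f) = f := rfl

lemma fourier_conj (u : EuclideanSpace ℝ (Fin N) → ℂ) (ξ : EuclideanSpace ℝ (Fin N)) :
    𝓕 (fun x => (starRingEnd ℂ) (u x)) ξ = (starRingEnd ℂ) (𝓕 u (-ξ)) := by
  rw [Real.fourier_eq', Real.fourier_eq', ← integral_conj]
  refine integral_congr_ae (Filter.Eventually.of_forall fun v => ?_)
  have h : ⟪v, -ξ⟫ = -⟪v, ξ⟫ := inner_neg_right _ _
  simp only [h, smul_eq_mul, map_mul, ← Complex.exp_conj]
  congr 2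
  simp [Complex.ext_iff]

lemma plancherel (g : SchwartzMap (EuclideanSpace ℝ (Fin N)) ℂ) :
    ∫ ξ, ‖𝓕 (⇑g) ξ‖ ^ 2 = ∫ x, ‖g x‖ ^ 2 := by
  set V := EuclideanSpace ℝ (Fin N)
  set G := SchwartzMap.fourierTransformCLM ℝ g with hGdef
  have hGa : ⇑G = 𝓕 ⇑g := rfl
  have hint_g : Integrable (⇑g) := g.integrable
  have hint_G : Integrable (⇑G) := G.integrable
  have h_int_conj : Integrable fun ξ => (starRingEnd ℂ) (G ξ) := by
    refine ⟨(Complex.continuous_conj.comp G.continuous).aestronglyMeasurable, ?_⟩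
    have : (fun ξ => ‖(starRingEnd ℂ) (G ξ)‖) = fun ξ => ‖G ξ‖ := by
      ext ξ; simp
    simpa [HasFiniteIntegral] using hint_G.2
  have hflip : (innerₗ V).flip = innerₗ V := by
    apply LinearMap.ext; intro x; apply LinearMap.ext; intro y
    simp only [LinearMap.flip_apply, innerₗ_apply_apply]
    exact real_inner_comm x y
  have mult := VectorFourier.integral_bilin_fourierIntegral_eq_flip
      (V := V) (W := V) (L := innerₗ V) (μ := volume) (ν := volume)
      (ContinuousLinearMap.mul ℂ ℂ) Real.continuous_fourierChar
      continuous_inner hint_g h_int_conj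
  rw [hflip] at mult
  have hGinv : ∀ x, 𝓕 (fun ξ => (starRingEnd ℂ) (G ξ)) x = (starRingEnd ℂ) (g x) := by
    intro x
    rw [fourier_conj]
    congr 1
    have h1 : 𝓕 (⇑G) (-x) = 𝓕⁻ (⇑G) x :=
      (Real.fourierInv_eq_fourier_neg _ _).symm
    rw [h1, hGa]
    rw [g.continuous.fourierInv_fourier_eq hint_g (hGa ▸ hint_G)]
  have mult' : ∫ ξ, 𝓕 (⇑g) ξ * (starRingEnd ℂ) (𝓕 (⇑g) ξ) =
      ∫ x, g x * (starRingEnd ℂ) (g x) := by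
    have lhs_eq : ∀ ξ : V, (ContinuousLinearMap.mul ℂ ℂ)
        (VectorFourier.fourierIntegral Real.fourierChar volume (innerₗ V) (⇑g) ξ)
        ((starRingEnd ℂ) (G ξ)) = 𝓕 (⇑g) ξ * (starRingEnd ℂ) (𝓕 (⇑g) ξ) := by
      intro ξ; rfl
    have rhs_eq : ∀ x : V, (ContinuousLinearMap.mul ℂ ℂ) (g x)
        (VectorFourier.fourierIntegral Real.fourierChar volume (innerₗ V)
          (fun ξ => (starRingEnd ℂ) (G ξ)) x) = g x * (starRingEnd ℂ) (g x) := by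
      intro x
      have : VectorFourier.fourierIntegral Real.fourierChar volume (innerₗ V)
          (fun ξ => (starRingEnd ℂ) (G ξ)) x = (starRingEnd ℂ) (g x) := hGinv x
      rw [show (ContinuousLinearMap.mul ℂ ℂ) (g x)
        (VectorFourier.fourierIntegral Real.fourierChar volume (innerₗ V)
          (fun ξ => (starRingEnd ℂ) (G ξ)) x) = g x *
          (VectorFourier.fourierIntegral Real.fourierChar volume (innerₗ V)
          (fun ξ => (starRingEnd ℂ) (G ξ)) x) from rfl, this]
    calc ∫ ξ, 𝓕 (⇑g) ξ * (starRingEnd ℂ) (𝓕 (⇑g) ξ)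
        = ∫ ξ, (ContinuousLinearMap.mul ℂ ℂ)
            (VectorFourier.fourierIntegral Real.fourierChar volume (innerₗ V) (⇑g) ξ)
            ((starRingEnd ℂ) (G ξ)) := by simp_rw [lhs_eq]; rfl
      _ = ∫ x, (ContinuousLinearMap.mul ℂ ℂ) (g x)
            (VectorFourier.fourierIntegral Real.fourierChar volume (innerₗ V)
              (fun ξ => (starRingEnd ℂ) (G ξ)) x) := mult
      _ = ∫ x, g x * (starRingEnd ℂ) (g x) := by simp_rw [rhs_eq]
  have hmc : ∀ z : ℂ, z * (starRingEnd ℂ) z = ((‖z‖ ^ 2 : ℝ) : ℂ) := by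
    intro z
    rw [Complex.mul_conj, Complex.normSq_eq_norm_sq]
  simp_rw [hmc] at mult'
  have e1 : ∫ ξ, ((‖𝓕 (⇑g) ξ‖ ^ 2 : ℝ) : ℂ) = ((∫ ξ, ‖𝓕 (⇑g) ξ‖ ^ 2 : ℝ) : ℂ) :=
    integral_ofReal
  have e2 : ∫ x, ((‖g x‖ ^ 2 : ℝ) : ℂ) = ((∫ x, ‖g x‖ ^ 2 : ℝ) : ℂ) := integral_ofReal
  rw [e1, e2] at mult'
  exact_mod_cast mult'

lemma integrable_rpow_mul_sq (g : SchwartzMap (EuclideanSpace ℝ (Fin N)) ℂ) {r : ℝ}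
    (hr : 0 ≤ r) :
    Integrable fun x : EuclideanSpace ℝ (Fin N) => ‖x‖ ^ r * ‖g x‖ ^ 2 := by
  obtain ⟨C, hC0, hC⟩ := g.decay 0 0
  simp only [pow_zero, one_mul, norm_iteratedFDeriv_zero] at hC
  set k : ℕ := ⌈r⌉₊ with hk
  have hmaj : Integrable fun x : EuclideanSpace ℝ (Fin N) =>
      C * ‖g x‖ + C * (‖x‖ ^ k * ‖g x‖) :=
    ((g.integrable.norm.const_mul C).add ((g.integrable_pow_mul volume k).const_mul C))
  refine hmaj.mono' ?_ (Filter.Eventually.of_forall fun x => ?_)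
  · refine (Continuous.mul ?_ ((g.continuous.norm.pow 2))).aestronglyMeasurable
    exact continuous_norm.rpow_const fun x => Or.inr hr
  · have h1 : ‖x‖ ^ r ≤ 1 + ‖x‖ ^ k := by
      rcases le_or_gt ‖x‖ 1 with h | h
      · have := Real.rpow_le_one (norm_nonneg x) h hr
        have hpk : (0:ℝ) ≤ ‖x‖ ^ k := by positivity
        linarith
      · have h0 : (1:ℝ) ≤ ‖x‖ := h.le
        have : ‖x‖ ^ r ≤ ‖x‖ ^ (k : ℝ) :=
          Real.rpow_le_rpow_of_exponent_le h0 (Nat.le_ceil r)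
        rw [Real.rpow_natCast] at this
        have hpk : (0:ℝ) ≤ 1 := zero_le_one
        linarith
    have h2 : ‖g x‖ ^ 2 ≤ C * ‖g x‖ := by
      have := hC x
      have h3 : (0:ℝ) ≤ ‖g x‖ := norm_nonneg _
      nlinarith
    have h4 : (0:ℝ) ≤ ‖x‖ ^ r := Real.rpow_nonneg (norm_nonneg x) r
    have h5 : (0:ℝ) ≤ ‖g x‖ ^ 2 := by positivity
    have h6 : (0:ℝ) ≤ ‖x‖ ^ k := by positivity
    have h7 : (0:ℝ) ≤ ‖g x‖ := norm_nonneg _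
    have : ‖x‖ ^ r * ‖g x‖ ^ 2 ≤ (1 + ‖x‖ ^ k) * (C * ‖g x‖) := by
      apply mul_le_mul h1 h2 h5 (by linarith)
    rw [Real.norm_of_nonneg (by positivity)]
    nlinarith [mul_nonneg h6 (mul_nonneg (le_of_lt hC0) h7)]

end Aux

set_option maxHeartbeats 1000000 in
/-- Lemma A.2 of the paper, on the Fourier side: for `0 < q < p` and `f` smooth with
compact support in a bounded open `Ω ⊆ ℝ^N`,
`∫ |ξ|^{2q} |𝓕f(ξ)|² dξ ≤ c ∫ |ξ|^{2p} |𝓕f(ξ)|² dξ`. -/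
theorem stmt10 (N : ℕ) (hN : 0 < N) (Ω : Set (EuclideanSpace ℝ (Fin N)))
    (hΩo : IsOpen Ω) (hΩb : IsBounded Ω) (p q : ℝ) (hq : 0 < q) (hqp : q < p) :
    ∃ c : ℝ, 0 < c ∧
      ∀ f : EuclideanSpace ℝ (Fin N) → ℂ,
        ContDiff ℝ (⊤ : ℕ∞) f → HasCompactSupport f → tsupport f ⊆ Ω →
          (∫ ξ, ‖ξ‖ ^ (2 * q) * ‖𝓕 f ξ‖ ^ 2) ≤ c * ∫ ξ, ‖ξ‖ ^ (2 * p) * ‖𝓕 f ξ‖ ^ 2 := by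
  obtain ⟨M₀, hM₀⟩ := hΩb.subset_closedBall (0 : EuclideanSpace ℝ (Fin N))
  set M : ℝ := max M₀ 1 with hM
  have hΩM : Ω ⊆ closedBall (0 : EuclideanSpace ℝ (Fin N)) M :=
    hM₀.trans (closedBall_subset_closedBall (le_max_left _ _))
  set A : ℝ := (volume (closedBall (0 : EuclideanSpace ℝ (Fin N)) M)).toReal with hA
  have hA0 : 0 ≤ A := ENNReal.toReal_nonneg
  set B : ℝ := (volume (ball (0 : EuclideanSpace ℝ (Fin N)) 1)).toReal with hB
  have hB0 : 0 ≤ B := ENNReal.toReal_nonneg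
  have hBA1 : (0:ℝ) < B * A + 1 := by positivity
  set R : ℝ := min 1 (1 / (2 * (B * A + 1))) with hRdef
  have hR0 : 0 < R := lt_min one_pos (by positivity)
  have hR1 : R ≤ 1 := min_le_left _ _
  have hRBA : R * (B * A) ≤ 1 / 2 := by
    have h1 : R ≤ 1 / (2 * (B * A + 1)) := min_le_right _ _
    have h2 : B * A ≤ B * A + 1 := by linarith
    calc R * (B * A) ≤ (1 / (2 * (B * A + 1))) * (B * A + 1) :=
          mul_le_mul h1 h2 (by positivity) (by positivity)
      _ = 1 / 2 := by field_simp
  have hc0 : (0:ℝ) < 2 * R ^ (-(2 * p)) + 1 := by positivity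
  refine ⟨2 * R ^ (-(2 * p)) + 1, hc0, fun f hfsm hfsupp hfΩ => ?_⟩
  have h2q0 : (0:ℝ) ≤ 2 * q := by linarith
  have h2p0 : (0:ℝ) ≤ 2 * p := by linarith
  set g := toSchwartz f hfsm hfsupp with hgdef
  set Gs := SchwartzMap.fourierTransformCLM ℝ g with hGs
  have hGcoe : ⇑Gs = 𝓕 f := by
    rw [hGs, SchwartzMap.fourierTransformCLM_apply, hgdef, SchwartzMap.fourier_coe, toSchwartz_apply]
  have intq : Integrable fun ξ => ‖ξ‖ ^ (2*q) * ‖𝓕 f ξ‖ ^ 2 := by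
    have h := integrable_rpow_mul_sq Gs h2q0
    rwa [hGcoe] at h
  have intp : Integrable fun ξ => ‖ξ‖ ^ (2*p) * ‖𝓕 f ξ‖ ^ 2 := by
    have h := integrable_rpow_mul_sq Gs h2p0
    rwa [hGcoe] at h
  have int2 : Integrable fun ξ => ‖𝓕 f ξ‖ ^ 2 := by
    have h := integrable_rpow_mul_sq Gs (le_refl (0:ℝ))
    rw [hGcoe] at h
    simpa using h
  have intf2 : Integrable fun x => ‖f x‖ ^ 2 := by
    refine Continuous.integrable_of_hasCompactSupport (hfsm.continuous.norm.pow 2) ?_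
    exact hfsupp.comp_left (g := fun z : ℂ => ‖z‖ ^ 2) (by simp)
  set L1 : ℝ := ∫ x, ‖f x‖ with hL1
  have hL10 : 0 ≤ L1 := integral_nonneg fun x => norm_nonneg _
  set I2 : ℝ := ∫ x, ‖f x‖ ^ 2 with hI2
  have hI20 : 0 ≤ I2 := integral_nonneg fun x => by positivity
  have hPl : (∫ ξ, ‖𝓕 f ξ‖ ^ 2) = I2 := by
    have h := plancherel (toSchwartz f hfsm hfsupp)
    rw [toSchwartz_apply] at h
    rw [hI2]
    exact_mod_cast h
  have hsup : ∀ ξ, ‖𝓕 f ξ‖ ≤ L1 := fun ξ =>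
    VectorFourier.norm_fourierIntegral_le_integral_norm _ _ _ _ _
  -- Cauchy–Schwarz : L1 ^ 2 ≤ A * I2
  have hCS : L1 ^ 2 ≤ A * I2 := by
    set μM := volume.restrict (closedBall (0 : EuclideanSpace ℝ (Fin N)) M) with hμM
    haveI : IsFiniteMeasure μM := by
      constructor
      rw [hμM, Measure.restrict_apply_univ]
      exact measure_closedBall_lt_top
    have hzero : ∀ x ∉ closedBall (0 : EuclideanSpace ℝ (Fin N)) M, ‖f x‖ = 0 := by
      intro x hx
      have hxt : x ∉ tsupport f := fun h => hx (hΩM (hfΩ h))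
      simp [image_eq_zero_of_notMem_tsupport hxt]
    have hL1eq : L1 = ∫ x, ‖f x‖ ∂μM := by
      rw [hL1, hμM, setIntegral_eq_integral_of_forall_compl_eq_zero hzero]
    have hmemf : MemLp (fun x => ‖f x‖) (ENNReal.ofReal 2) μM :=
      (hfsm.continuous.norm.memLp_of_hasCompactSupport (μ := volume) hfsupp.norm).restrict _
    have hmem1 : MemLp (fun _ : EuclideanSpace ℝ (Fin N) => (1:ℝ)) (ENNReal.ofReal 2) μM :=
      memLp_const 1
    have hconj : (2:ℝ).HolderConjugate 2 := Real.HolderConjugate.two_two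
    have hH := integral_mul_le_Lp_mul_Lq_of_nonneg hconj
      (Filter.Eventually.of_forall fun x => norm_nonneg (f x))
      (Filter.Eventually.of_forall fun _ => zero_le_one) hmemf hmem1
    simp only [mul_one] at hH
    have hT2 : (∫ x, ‖f x‖ ^ (2:ℝ) ∂μM) = ∫ x, ‖f x‖ ^ 2 ∂μM := by
      refine integral_congr_ae (Filter.Eventually.of_forall fun x => ?_)
      show ‖f x‖ ^ (2:ℝ) = ‖f x‖ ^ (2:ℕ)
      rw [show ((2:ℝ)) = ((2:ℕ):ℝ) by norm_num, Real.rpow_natCast]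
    have hone : (∫ _x, (1:ℝ) ^ (2:ℝ) ∂μM) = A := by
      simp only [Real.one_rpow, integral_const, smul_eq_mul, mul_one]
      rw [hμM, measureReal_def, Measure.restrict_apply_univ]
    have hTle : (∫ x, ‖f x‖ ^ 2 ∂μM) ≤ I2 := by
      rw [hμM]
      exact setIntegral_le_integral intf2 (Filter.Eventually.of_forall fun x => by positivity)
    have hT0 : 0 ≤ ∫ x, ‖f x‖ ^ 2 ∂μM := integral_nonneg fun x => by positivity
    rw [hT2, hone] at hH
    have hsq : L1 ^ 2 ≤ ((∫ x, ‖f x‖ ^ 2 ∂μM) ^ ((1:ℝ)/2) * A ^ ((1:ℝ)/2)) ^ 2 := by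
      refine pow_le_pow_left₀ hL10 ?_ 2
      rw [hL1eq]
      convert hH using 2 <;> norm_num
    have hhalf : ∀ {x : ℝ}, 0 ≤ x → (x ^ ((1:ℝ)/2)) ^ 2 = x := by
      intro x hx
      rw [← Real.rpow_natCast (x ^ ((1:ℝ)/2)) 2, ← Real.rpow_mul hx]
      norm_num
    calc L1 ^ 2 ≤ ((∫ x, ‖f x‖ ^ 2 ∂μM) ^ ((1:ℝ)/2) * A ^ ((1:ℝ)/2)) ^ 2 := hsq
      _ = (∫ x, ‖f x‖ ^ 2 ∂μM) * A := by rw [mul_pow, hhalf hT0, hhalf hA0]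
      _ ≤ I2 * A := mul_le_mul_of_nonneg_right hTle hA0
      _ = A * I2 := mul_comm _ _
  -- Poincaré-type inequality : I2 ≤ 2 R^{-2p} Sp
  set Sp : ℝ := ∫ ξ, ‖ξ‖ ^ (2*p) * ‖𝓕 f ξ‖ ^ 2 with hSpdef
  have hSp0 : 0 ≤ Sp := integral_nonneg fun ξ => by positivity
  set s := closedBall (0 : EuclideanSpace ℝ (Fin N)) R with hs
  have hsm : MeasurableSet s := measurableSet_closedBall
  have hsplit : (∫ ξ in s, ‖𝓕 f ξ‖ ^ 2) + (∫ ξ in sᶜ, ‖𝓕 f ξ‖ ^ 2) = ∫ ξ, ‖𝓕 f ξ‖ ^ 2 :=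
    integral_add_compl hsm int2
  have hvol : (volume s).toReal = R ^ N * B := by
    rw [hs, Measure.addHaar_closedBall _ _ hR0.le, ENNReal.toReal_mul,
      ENNReal.toReal_ofReal (by positivity)]
    congr 2
    exact finrank_euclideanSpace_fin
  have hlow : (∫ ξ in s, ‖𝓕 f ξ‖ ^ 2) ≤ (R ^ N * B) * L1 ^ 2 := by
    have h := setIntegral_mono_on int2.integrableOn
      (integrableOn_const measure_closedBall_lt_top.ne) hsm
      (fun ξ _ => pow_le_pow_left₀ (norm_nonneg _) (hsup ξ) 2)
    rw [setIntegral_const, smul_eq_mul, measureReal_def, hvol] at h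
    exact h
  have hhigh : (∫ ξ in sᶜ, ‖𝓕 f ξ‖ ^ 2) ≤ R ^ (-(2*p)) * Sp := by
    have step1 : (∫ ξ in sᶜ, ‖𝓕 f ξ‖ ^ 2)
        ≤ ∫ ξ in sᶜ, R ^ (-(2*p)) * (‖ξ‖ ^ (2*p) * ‖𝓕 f ξ‖ ^ 2) := by
      refine setIntegral_mono_on int2.integrableOn ((intp.const_mul _).integrableOn)
        hsm.compl fun ξ hξ => ?_
      have hξR : R ≤ ‖ξ‖ := by
        have h1 : ¬ (dist ξ 0 ≤ R) := by simpa [hs, mem_closedBall] using hξ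
        rw [dist_zero_right] at h1
        linarith
      have hrp : R ^ (2*p) ≤ ‖ξ‖ ^ (2*p) := Real.rpow_le_rpow hR0.le hξR h2p0
      have key : (1:ℝ) ≤ R ^ (-(2*p)) * ‖ξ‖ ^ (2*p) := by
        have h1 : R ^ (-(2*p)) * R ^ (2*p) = 1 := by
          rw [← Real.rpow_add hR0]
          simp
        have h2 : R ^ (-(2*p)) * R ^ (2*p) ≤ R ^ (-(2*p)) * ‖ξ‖ ^ (2*p) :=
          mul_le_mul_of_nonneg_left hrp (Real.rpow_nonneg hR0.le _)
        linarith
      have h3 := mul_le_mul_of_nonneg_right key (show (0:ℝ) ≤ ‖𝓕 f ξ‖ ^ 2 by positivity)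
      rw [one_mul] at h3
      calc ‖𝓕 f ξ‖ ^ 2 ≤ R ^ (-(2*p)) * ‖ξ‖ ^ (2*p) * ‖𝓕 f ξ‖ ^ 2 := h3
        _ = R ^ (-(2*p)) * (‖ξ‖ ^ (2*p) * ‖𝓕 f ξ‖ ^ 2) := by ring
    have step2 : (∫ ξ in sᶜ, R ^ (-(2*p)) * (‖ξ‖ ^ (2*p) * ‖𝓕 f ξ‖ ^ 2))
        = R ^ (-(2*p)) * ∫ ξ in sᶜ, ‖ξ‖ ^ (2*p) * ‖𝓕 f ξ‖ ^ 2 := integral_const_mul _ _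
    have step3 : (∫ ξ in sᶜ, ‖ξ‖ ^ (2*p) * ‖𝓕 f ξ‖ ^ 2) ≤ Sp :=
      setIntegral_le_integral intp (Filter.Eventually.of_forall fun ξ => by positivity)
    calc (∫ ξ in sᶜ, ‖𝓕 f ξ‖ ^ 2) ≤ _ := step1
      _ = R ^ (-(2*p)) * ∫ ξ in sᶜ, ‖ξ‖ ^ (2*p) * ‖𝓕 f ξ‖ ^ 2 := step2
      _ ≤ R ^ (-(2*p)) * Sp :=
          mul_le_mul_of_nonneg_left step3 (Real.rpow_nonneg hR0.le _)
  have hRN : R ^ N ≤ R := pow_le_of_le_one hR0.le hR1 hN.ne'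
  have hpoin : I2 ≤ 2 * R ^ (-(2*p)) * Sp := by
    have h1 : I2 = (∫ ξ in s, ‖𝓕 f ξ‖ ^ 2) + (∫ ξ in sᶜ, ‖𝓕 f ξ‖ ^ 2) := by
      rw [hsplit, hPl]
    have hRNB : (0:ℝ) ≤ R ^ N * B := by positivity
    have h2 : (R ^ N * B) * L1 ^ 2 ≤ (R * B) * (A * I2) := by
      calc (R ^ N * B) * L1 ^ 2 ≤ (R ^ N * B) * (A * I2) :=
            mul_le_mul_of_nonneg_left hCS hRNB
        _ ≤ (R * B) * (A * I2) :=
            mul_le_mul_of_nonneg_right (mul_le_mul_of_nonneg_right hRN hB0)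
              (mul_nonneg hA0 hI20)
    have h3 : (R * B) * (A * I2) ≤ (1/2) * I2 := by
      have h4 := mul_le_mul_of_nonneg_right hRBA hI20
      calc (R * B) * (A * I2) = (R * (B * A)) * I2 := by ring
        _ ≤ (1/2) * I2 := h4
    linarith
  -- final splitting at radius 1
  set t := closedBall (0 : EuclideanSpace ℝ (Fin N)) 1 with ht
  have htm : MeasurableSet t := measurableSet_closedBall
  have hsplitq : (∫ ξ in t, ‖ξ‖ ^ (2*q) * ‖𝓕 f ξ‖ ^ 2)
      + (∫ ξ in tᶜ, ‖ξ‖ ^ (2*q) * ‖𝓕 f ξ‖ ^ 2) = ∫ ξ, ‖ξ‖ ^ (2*q) * ‖𝓕 f ξ‖ ^ 2 :=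
    integral_add_compl htm intq
  have hlowq : (∫ ξ in t, ‖ξ‖ ^ (2*q) * ‖𝓕 f ξ‖ ^ 2) ≤ I2 := by
    have h1 : (∫ ξ in t, ‖ξ‖ ^ (2*q) * ‖𝓕 f ξ‖ ^ 2) ≤ ∫ ξ in t, ‖𝓕 f ξ‖ ^ 2 := by
      refine setIntegral_mono_on intq.integrableOn int2.integrableOn htm fun ξ hξ => ?_
      have hξ1 : ‖ξ‖ ≤ 1 := by simpa [ht, mem_closedBall, dist_zero_right] using hξ
      have hle1 : ‖ξ‖ ^ (2*q) ≤ 1 := Real.rpow_le_one (norm_nonneg _) hξ1 h2q0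
      nlinarith [sq_nonneg ‖𝓕 f ξ‖, Real.rpow_nonneg (norm_nonneg ξ) (2*q)]
    have h2 : (∫ ξ in t, ‖𝓕 f ξ‖ ^ 2) ≤ ∫ ξ, ‖𝓕 f ξ‖ ^ 2 :=
      setIntegral_le_integral int2 (Filter.Eventually.of_forall fun ξ => by positivity)
    rw [hPl] at h2
    linarith
  have hhighq : (∫ ξ in tᶜ, ‖ξ‖ ^ (2*q) * ‖𝓕 f ξ‖ ^ 2) ≤ Sp := by
    have h1 : (∫ ξ in tᶜ, ‖ξ‖ ^ (2*q) * ‖𝓕 f ξ‖ ^ 2)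
        ≤ ∫ ξ in tᶜ, ‖ξ‖ ^ (2*p) * ‖𝓕 f ξ‖ ^ 2 := by
      refine setIntegral_mono_on intq.integrableOn intp.integrableOn htm.compl fun ξ hξ => ?_
      have hξ1 : 1 ≤ ‖ξ‖ := by
        have h2 : ¬ (dist ξ 0 ≤ 1) := by simpa [ht, mem_closedBall] using hξ
        rw [dist_zero_right] at h2
        linarith
      have hmono : ‖ξ‖ ^ (2*q) ≤ ‖ξ‖ ^ (2*p) :=
        Real.rpow_le_rpow_of_exponent_le hξ1 (by linarith)
      nlinarith [sq_nonneg ‖𝓕 f ξ‖]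
    have h2 : (∫ ξ in tᶜ, ‖ξ‖ ^ (2*p) * ‖𝓕 f ξ‖ ^ 2) ≤ Sp :=
      setIntegral_le_integral intp (Filter.Eventually.of_forall fun ξ => by positivity)
    linarith
  calc (∫ ξ, ‖ξ‖ ^ (2*q) * ‖𝓕 f ξ‖ ^ 2)
      = (∫ ξ in t, ‖ξ‖ ^ (2*q) * ‖𝓕 f ξ‖ ^ 2)
        + (∫ ξ in tᶜ, ‖ξ‖ ^ (2*q) * ‖𝓕 f ξ‖ ^ 2) := hsplitq.symm
    _ ≤ I2 + Sp := add_le_add hlowq hhighq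
    _ ≤ 2 * R ^ (-(2*p)) * Sp + Sp := by linarith
    _ = (2 * R ^ (-(2*p)) + 1) * Sp := by ring
end
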